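/- Let d ≥ 2 and for each i = 1,...,d let g_i : Fin N_i → ℝ be given functions and f_0 ∈ ℝ. Define 2×2 matrices: for each j, G_1(j) = row vector (1, g_1(j)), G_i(j) = [[1, g_i(j)],[0,1]] for 2 ≤ i ≤ d-1, and G_d(j) = column vector (g_d(j) + f_0, 1). Then for every multi-index (j_1,...,j_d), the matrix product G_1(j_1)·G_2(j_2)···G_d(j_d) is the 1×1 matrix with entry f_0 + g_1(j_1) + g_2(j_2) + ... + g_d(j_d). -/

import Mathlib

/-!
Matrices of the form `!![1, x; 0, 1]` multiply by adding their corner entries, so the product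
of the middle TT-cores is `!![1, s; 0, 1]` with `s` the sum of the middle terms `g i (j i)`.
The boundary row `!![1, a]` and column `!![b; 1]` then contribute `a + s + b`.
-/

open Matrix

theorem Matrix.list_prod_map_unitriangular {α R : Type*} [Semiring R] (l : List α) (f : α → R) :
    (l.map fun a => !![1, f a; 0, 1]).prod = !![1, (l.map f).sum; 0, 1] := by
  induction l with
  | nil => simp [one_fin_two]
  | cons a l ih => simp [ih, add_comm]

theorem Matrix.row_mul_unitriangular_mul_col {R : Type*} [Semiring R] (a s b : R) :
    !![1, a] * !![1, s; 0, 1] * !![b; 1] = !![a + s + b] := by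
  ext i k
  fin_cases i; fin_cases k
  simp [mul_apply, Fin.sum_univ_two, add_comm, add_left_comm]

theorem Fin.sum_filter_eq_sum_finRange_filter {M : Type*} [AddCommMonoid M] {n : ℕ}
    (p : Fin n → Prop) [DecidablePred p] (f : Fin n → M) :
    ∑ i ∈ Finset.univ.filter p, f i = (((List.finRange n).filter p).map f).sum := by
  simp [Finset.sum, Fin.univ_def, Finset.filter]

theorem Fin.sum_univ_eq_first_add_sum_interior_add_last {M : Type*} [AddCommMonoid M] {n : ℕ}
    (hn : 1 < n) (f : Fin n → M) :
    ∑ i, f i = f ⟨0, by omega⟩ +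
      ∑ i ∈ Finset.univ.filter (fun i : Fin n => 0 < (i : ℕ) ∧ (i : ℕ) < n - 1), f i +
      f ⟨n - 1, by omega⟩ := by
  have hboundary : Finset.univ.filter (fun i : Fin n => ¬(0 < (i : ℕ) ∧ (i : ℕ) < n - 1)) =
      {⟨0, by omega⟩, ⟨n - 1, by omega⟩} := by
    ext i
    simp only [Finset.mem_filter, Finset.mem_univ, true_and, Finset.mem_insert,
      Finset.mem_singleton, Fin.ext_iff]
    omega
  have hne : (⟨0, by omega⟩ : Fin n) ≠ ⟨n - 1, by omega⟩ := by
    rw [Ne, Fin.mk.injEq]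
    omega
  rw [← Finset.sum_filter_add_sum_filter_not _ (fun i : Fin n => 0 < (i : ℕ) ∧ (i : ℕ) < n - 1),
    hboundary, Finset.sum_pair hne]
  abel

/-- The first-order ANOVA decomposition admits an exact TT representation
with all TT-ranks equal to 2: the product of the TT-core slices at any
multi-index equals the 1×1 matrix with entry `f0 + ∑ i, g i (j i)`. -/
theorem tt_anova_representation
    (d : ℕ) (hd : 2 ≤ d) (N : Fin d → ℕ)
    (g : ∀ i : Fin d, Fin (N i) → ℝ) (f0 : ℝ)
    (j : ∀ i : Fin d, Fin (N i)) :
    (!![1, g ⟨0, by omega⟩ (j ⟨0, by omega⟩)] : Matrix (Fin 1) (Fin 2) ℝ) *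
      (((List.finRange d).filter
          (fun i : Fin d => 0 < (i : ℕ) ∧ (i : ℕ) < d - 1)).map
          (fun i => (!![1, g i (j i); 0, 1] : Matrix (Fin 2) (Fin 2) ℝ))).prod *
      (!![g ⟨d - 1, by omega⟩ (j ⟨d - 1, by omega⟩) + f0; 1] :
        Matrix (Fin 2) (Fin 1) ℝ)
    = !![f0 + ∑ i : Fin d, g i (j i)] := by
  rw [list_prod_map_unitriangular, row_mul_unitriangular_mul_col,
    ← Fin.sum_filter_eq_sum_finRange_filter,
    Fin.sum_univ_eq_first_add_sum_interior_add_last hd (fun i => g i (j i))]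
  congr 3
  ring
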